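/- Let F : K → ℝ be a Legendre function on a closed convex set K ⊆ ℝ^n, let C ⊆ K be a nonempty affine subspace, let π₀ be in the interior Ω of K, and let π̄ be the Bregman projection of π₀ onto C. Then the Pythagorean identity holds with equality: for every π ∈ C, B_F(π ‖ π₀) = B_F(π ‖ π̄) + B_F(π̄ ‖ π₀). -/

import Mathlib

/-!
By the three-point identity
`B(π ‖ π₀) = B(π ‖ π̄) + B(π̄ ‖ π₀) + ⟪∇F(π̄) - ∇F(π₀), π - π̄⟫`
the claim is the vanishing of the last term. Since `C` contains the whole line through `π̄` and `π`,
`t ↦ B(π̄ + t (π - π̄) ‖ π₀)` is minimal at `t = 0`, and its derivative there is exactly that term.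
-/

open scoped InnerProductSpace

noncomputable def breg {n : ℕ} (F : EuclideanSpace ℝ (Fin n) → ℝ)
    (g : EuclideanSpace ℝ (Fin n) → EuclideanSpace ℝ (Fin n))
    (p q : EuclideanSpace ℝ (Fin n)) : ℝ :=
  F p - F q - ⟪g q, p - q⟫_ℝ

section

variable {E : Type*} [NormedAddCommGroup E] [InnerProductSpace ℝ E] [CompleteSpace E]

theorem HasGradientAt.inner_eq_zero_of_forall_le_add_smul {f : E → ℝ} {f' x v : E}
    (hf : HasGradientAt f f' x) (hmin : ∀ t : ℝ, f x ≤ f (x + t • v)) : ⟪f', v⟫_ℝ = 0 := by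
  have hline : HasDerivAt (fun t : ℝ => x + t • v) v 0 := by
    simpa using ((hasDerivAt_id (0 : ℝ)).smul_const v).const_add x
  have hderiv : HasDerivAt (fun t : ℝ => f (x + t • v)) ⟪f', v⟫_ℝ 0 :=
    (hasGradientAt_iff_hasFDerivAt.mp hf).comp_hasDerivAt_of_eq (0 : ℝ) hline (by simp)
  refine IsLocalMin.hasDerivAt_eq_zero (IsMinOn.isLocalMin (s := Set.univ) ?_ Filter.univ_mem) hderiv
  exact fun t _ => by simpa using hmin t

end

section

variable {n : ℕ} {F : EuclideanSpace ℝ (Fin n) → ℝ}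
  {g : EuclideanSpace ℝ (Fin n) → EuclideanSpace ℝ (Fin n)}

theorem hasGradientAt_breg_left {q r : EuclideanSpace ℝ (Fin n)} (hF : HasGradientAt F (g q) q) :
    HasGradientAt (fun p => breg F g p r) (g q - g r) q := by
  rw [hasGradientAt_iff_hasFDerivAt] at hF ⊢
  have hlin : HasFDerivAt (fun p => ⟪g r, p - r⟫_ℝ) (InnerProductSpace.toDual ℝ _ (g r)) q :=
    ((InnerProductSpace.toDual ℝ _ (g r)).hasFDerivAt.comp q
      ((hasFDerivAt_id q).sub_const r)).congr_fderiv (by ext; simp)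
  rw [map_sub]
  exact (hF.sub_const (F r)).sub hlin

theorem breg_three_point (p q r : EuclideanSpace ℝ (Fin n)) :
    breg F g p r = breg F g p q + breg F g q r + ⟪g q - g r, p - q⟫_ℝ := by
  have : p - r = (p - q) + (q - r) := by abel
  simp only [breg, this, inner_add_right, inner_sub_left]
  ring

end

theorem stmt14_general {n : ℕ} (K : Set (EuclideanSpace ℝ (Fin n)))
    (C : Set (EuclideanSpace ℝ (Fin n)))
    (hCaff : ∀ p ∈ C, ∀ q ∈ C, ∀ t : ℝ, p + t • (q - p) ∈ C)
    (F : EuclideanSpace ℝ (Fin n) → ℝ)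
    (g : EuclideanSpace ℝ (Fin n) → EuclideanSpace ℝ (Fin n))
    (hg : ∀ x ∈ interior K, HasGradientAt F (g x) x)
    (π₀ : EuclideanSpace ℝ (Fin n))
    (πb : EuclideanSpace ℝ (Fin n)) (hπb : πb ∈ C) (hπbΩ : πb ∈ interior K)
    (hmin : ∀ π ∈ C, breg F g πb π₀ ≤ breg F g π π₀) :
    ∀ π ∈ C, breg F g π π₀ = breg F g π πb + breg F g πb π₀ := by
  intro π hπ
  have horth : ⟪g πb - g π₀, π - πb⟫_ℝ = 0 :=
    (hasGradientAt_breg_left (hg πb hπbΩ)).inner_eq_zero_of_forall_le_add_smul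
      fun t => hmin _ (hCaff πb hπb π hπ t)
  rw [breg_three_point π πb π₀, horth, add_zero]

/-- Pythagorean identity with equality for the Bregman projection
`π̄` of `π₀` onto a nonempty affine subspace `C`. -/
theorem stmt14 {n : ℕ} (K : Set (EuclideanSpace ℝ (Fin n)))
    (hKcl : IsClosed K) (hKco : Convex ℝ K)
    (C : Set (EuclideanSpace ℝ (Fin n))) (hCne : C.Nonempty) (hCK : C ⊆ K)
    (hCaff : ∀ p ∈ C, ∀ q ∈ C, ∀ t : ℝ, p + t • (q - p) ∈ C)
    (F : EuclideanSpace ℝ (Fin n) → ℝ)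
    (g : EuclideanSpace ℝ (Fin n) → EuclideanSpace ℝ (Fin n))
    (hstrict : StrictConvexOn ℝ (interior K) F)
    (hg : ∀ x ∈ interior K, HasGradientAt F (g x) x)
    (π₀ : EuclideanSpace ℝ (Fin n)) (hπ₀ : π₀ ∈ interior K)
    (πb : EuclideanSpace ℝ (Fin n)) (hπb : πb ∈ C) (hπbΩ : πb ∈ interior K)
    (hmin : ∀ π ∈ C, breg F g πb π₀ ≤ breg F g π π₀) :
    ∀ π ∈ C, breg F g π π₀ = breg F g π πb + breg F g πb π₀ :=
  stmt14_general K C hCaff F g hg π₀ πb hπb hπbΩ hmin
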